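/- arXiv:2104.10980 — 3 statements merged into one kernel-verified Lean document; each statement's English description precedes it below -/
import Mathlib

section
/- Let p_i, q_i ∈ (0,1) with q_i < p_i for all i, α ∈ (0,1), and R_i = (p_i/(1-p_i))·((1-q_i)/q_i). Define P = ∏p_i, Q = ∏q_i, P' = ∏(1-p_i), Q' = ∏(1-q_i), l_1 = P/Q, l_{2^n} = P'/Q'. For q_{0,0} ∈ (0, min{Q, (α/(1-α))·Q'}], set p_{0,0} = l_1·q_{0,0} and p_{0,1} = 1 − l_{2^n}·((1−α)/α)·q_{0,0}. Then p_{0,0}/(1 − (p_{0,1} − p_{0,0})) = α·∏R_i/(1 + α·(∏R_i − 1)). -/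
theorem optimal_asymptotic_detection (n : ℕ) (p q : Fin n → ℝ) (α : ℝ)
    (hp : ∀ i, p i ∈ Set.Ioo (0 : ℝ) 1) (hq : ∀ i, q i ∈ Set.Ioo (0 : ℝ) 1)
    (hqp : ∀ i, q i < p i) (hα : α ∈ Set.Ioo (0 : ℝ) 1)
    (q00 : ℝ)
    (hq00 : q00 ∈ Set.Ioc 0
      (min (∏ i, q i) ((α / (1 - α)) * ∏ i, (1 - q i)))) :
    let R : Fin n → ℝ := fun i => (p i / (1 - p i)) * ((1 - q i) / q i)
    let l₁ : ℝ := (∏ i, p i) / (∏ i, q i)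
    let l₂ : ℝ := (∏ i, (1 - p i)) / (∏ i, (1 - q i))
    let p00 : ℝ := l₁ * q00
    let p01 : ℝ := 1 - l₂ * ((1 - α) / α) * q00
    p00 / (1 - (p01 - p00)) =
      α * (∏ i, R i) / (1 + α * ((∏ i, R i) - 1)) := by
  intro R l₁ l₂ p00 p01
  obtain ⟨hα0, hα1⟩ := hα
  have hα1' : (0:ℝ) < 1 - α := by linarith
  have hq0 : 0 < q00 := hq00.1
  have hP : 0 < ∏ i, p i := Finset.prod_pos fun i _ => (hp i).1
  have hQ : 0 < ∏ i, q i := Finset.prod_pos fun i _ => (hq i).1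
  have hP' : 0 < ∏ i, (1 - p i) :=
    Finset.prod_pos fun i _ => by have := (hp i).2; linarith
  have hQ' : 0 < ∏ i, (1 - q i) :=
    Finset.prod_pos fun i _ => by have := (hq i).2; linarith
  have hR : (∏ i, R i) =
      ((∏ i, p i) * (∏ i, (1 - q i))) / ((∏ i, (1 - p i)) * (∏ i, q i)) := by
    simp only [R]
    rw [Finset.prod_mul_distrib, Finset.prod_div_distrib, Finset.prod_div_distrib]
    field_simp
  have hD1 : 1 - (p01 - p00) =
      q00 * ((∏ i, (1 - p i)) / (∏ i, (1 - q i)) * ((1 - α) / α)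
        + (∏ i, p i) / (∏ i, q i)) := by
    simp only [p01, p00, l₁, l₂]; ring
  have hD1pos : 0 < 1 - (p01 - p00) := by
    rw [hD1]; positivity
  have hD2 : 1 + α * ((∏ i, R i) - 1) =
      ((1 - α) * ((∏ i, (1 - p i)) * (∏ i, q i))
        + α * ((∏ i, p i) * (∏ i, (1 - q i))))
        / ((∏ i, (1 - p i)) * (∏ i, q i)) := by
    rw [hR]; field_simp; ring
  have hD2pos : 0 < 1 + α * ((∏ i, R i) - 1) := by
    rw [hD2]; positivity
  rw [div_eq_div_iff (ne_of_gt hD1pos) (ne_of_gt hD2pos)]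
  simp only [p00, p01, l₁, l₂, hR]
  field_simp
  ring
end

section
/- Let p_i, q_i ∈ (0,1) with q_i < p_i, α ∈ (0,1), l_1 = ∏p_i/∏q_i, l' = ∏(1-p_i)/∏(1-q_i). Suppose p_{0,0} ≤ l_1·q_{0,0} and p_{0,1} ≤ 1 − l'·((1−α)/α)·q_{0,0} with at least one inequality strict, q_{0,0} > 0, and 0 < p_{0,1} − p_{0,0} < 1. Then p_{0,0}/(1 − (p_{0,1} − p_{0,0})) < α·∏R_i/(1 + α·(∏R_i − 1)), where R_i = (p_i/(1-p_i))·((1-q_i)/q_i). -/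
theorem suboptimal_asymptotic_detection (n : ℕ) (p q : Fin n → ℝ) (α : ℝ)
    (hp : ∀ i, p i ∈ Set.Ioo (0 : ℝ) 1) (hq : ∀ i, q i ∈ Set.Ioo (0 : ℝ) 1)
    (hqp : ∀ i, q i < p i) (hα : α ∈ Set.Ioo (0 : ℝ) 1)
    (q00 p00 p01 : ℝ) (hq00 : 0 < q00)
    (h0 : p00 ≤ ((∏ i, p i) / (∏ i, q i)) * q00)
    (h1 : p01 ≤ 1 - ((∏ i, (1 - p i)) / (∏ i, (1 - q i))) * ((1 - α) / α) * q00)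
    (hstrict : p00 < ((∏ i, p i) / (∏ i, q i)) * q00 ∨
      p01 < 1 - ((∏ i, (1 - p i)) / (∏ i, (1 - q i))) * ((1 - α) / α) * q00)
    (hdiff0 : 0 < p01 - p00) (hdiff1 : p01 - p00 < 1) :
    p00 / (1 - (p01 - p00)) <
      α * (∏ i, (p i / (1 - p i)) * ((1 - q i) / q i)) /
        (1 + α * ((∏ i, (p i / (1 - p i)) * ((1 - q i) / q i)) - 1)) := by
  obtain ⟨hα0, hα1⟩ := hα
  have hA : 0 < ∏ i, p i := Finset.prod_pos fun i _ => (hp i).1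
  have hB : 0 < ∏ i, q i := Finset.prod_pos fun i _ => (hq i).1
  have hC : 0 < ∏ i, (1 - p i) := Finset.prod_pos fun i _ => by
    have := (hp i).2; linarith
  have hD : 0 < ∏ i, (1 - q i) := Finset.prod_pos fun i _ => by
    have := (hq i).2; linarith
  set L := (∏ i, p i) / (∏ i, q i) with hLdef
  set l' := (∏ i, (1 - p i)) / (∏ i, (1 - q i)) with hl'def
  set R := ∏ i, (p i / (1 - p i)) * ((1 - q i) / q i) with hRdef
  have hL : 0 < L := div_pos hA hB
  have hl' : 0 < l' := div_pos hC hD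
  have hRL : R * l' = L := by
    rw [hRdef, hLdef, hl'def, Finset.prod_mul_distrib, Finset.prod_div_distrib,
      Finset.prod_div_distrib]
    field_simp
  have hR : 0 < R := by nlinarith
  have h1α : 0 < 1 - α := by linarith
  have h1' : l' * ((1 - α) / α) * q00 ≤ 1 - p01 := by linarith
  have key : p00 * ((1 - α) * l' + α * L) < α * L * (1 - p01 + p00) := by
    have e3 : α * L * (l' * ((1 - α) / α) * q00) = (L * q00) * ((1 - α) * l') := by
      field_simp
    have e2 : α * L * (l' * ((1 - α) / α) * q00) ≤ α * L * (1 - p01) :=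
      mul_le_mul_of_nonneg_left h1' (by positivity)
    rcases hstrict with hs | hs
    · have e1' : p00 * ((1 - α) * l') < (L * q00) * ((1 - α) * l') := by
        have hpos := mul_pos h1α hl'
        nlinarith
      nlinarith
    · have h1'' : l' * ((1 - α) / α) * q00 < 1 - p01 := by linarith
      have e2' : α * L * (l' * ((1 - α) / α) * q00) < α * L * (1 - p01) :=
        mul_lt_mul_of_pos_left h1'' (by positivity)
      have e1 : p00 * ((1 - α) * l') ≤ (L * q00) * ((1 - α) * l') := by
        have hpos := mul_pos h1α hl'
        nlinarith
      nlinarith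
  have hd1 : 0 < 1 - (p01 - p00) := by linarith
  have hd2 : 0 < 1 + α * (R - 1) := by nlinarith
  rw [div_lt_div_iff₀ hd1 hd2]
  have key' : p00 * ((1 - α) * l' + α * (R * l')) < α * (R * l') * (1 - p01 + p00) := by
    rw [hRL]; exact key
  have h2 : (p00 * (1 + α * (R - 1))) * l' < (α * R * (1 - (p01 - p00))) * l' := by
    have e : (p00 * (1 + α * (R - 1))) * l' = p00 * ((1 - α) * l' + α * (R * l')) := by ring
    have e' : (α * R * (1 - (p01 - p00))) * l' = α * (R * l') * (1 - p01 + p00) := by ring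
    rw [e, e']; exact key'
  exact lt_of_mul_lt_mul_right h2 hl'.le
end

section
/- Let p, q ∈ (0,1) with q < p and α ∈ (0, q^n/p^n]. Then f(α) = ((1−α)p^n)/(q^n − α·p^n) satisfies f(α) < ((p/(1-p))·((1-q)/q))^n whenever α < q_m, where q_m = (Q_2 − 1)/(R^n − 1), R = (p/(1-p))((1-q)/q), Q_2 = ((1-q)/(1-p))^n. -/
theorem homogeneous_case1_odds_bound (n : ℕ) (p q α : ℝ)
    (hq : q ∈ Set.Ioo (0 : ℝ) 1) (hp : p ∈ Set.Ioo (0 : ℝ) 1) (hqp : q < p)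
    (hα : α ∈ Set.Ioc 0 (q ^ n / p ^ n))
    (hαm : α < (((1 - q) / (1 - p)) ^ n - 1) /
      (((p / (1 - p)) * ((1 - q) / q)) ^ n - 1)) :
    ((1 - α) * p ^ n) / (q ^ n - α * p ^ n) <
      ((p / (1 - p)) * ((1 - q) / q)) ^ n := by
  obtain ⟨hq0, hq1⟩ := hq
  obtain ⟨hp0, hp1⟩ := hp
  obtain ⟨hα0, hαQ⟩ := hα
  have h1p : (0:ℝ) < 1 - p := by linarith
  have h1q : (0:ℝ) < 1 - q := by linarith
  rcases Nat.eq_zero_or_pos n with hn | hn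
  · subst hn; simp at hαm; linarith
  have hR1 : 1 < (p / (1 - p)) * ((1 - q) / q) := by
    rw [div_mul_div_comm, lt_div_iff₀ (by positivity)]
    nlinarith
  have hRn : 1 < ((p / (1 - p)) * ((1 - q) / q)) ^ n :=
    one_lt_pow₀ hR1 hn.ne'
  have hQ2 : 1 < ((1 - q) / (1 - p)) ^ n :=
    one_lt_pow₀ (by rw [lt_div_iff₀ h1p]; linarith) hn.ne'
  -- key identity
  have hkey : ((p / (1 - p)) * ((1 - q) / q)) ^ n * q ^ n
      = p ^ n * ((1 - q) / (1 - p)) ^ n := by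
    rw [← mul_pow, ← mul_pow]
    congr 1
    field_simp
  have hP : (0:ℝ) < p ^ n := by positivity
  have hQ : (0:ℝ) < q ^ n := by positivity
  have hαm' : α * (((p / (1 - p)) * ((1 - q) / q)) ^ n - 1)
      < ((1 - q) / (1 - p)) ^ n - 1 := by
    rw [← lt_div_iff₀ (by linarith)]; exact hαm
  have hqn : q ^ n < p ^ n := by
    exact pow_lt_pow_left₀ hqp hq0.le hn.ne' |>.trans_le le_rfl
  have hden : 0 < q ^ n - α * p ^ n := by
    -- show α < q^n / p^n strictly, via q_m < q^n/p^n
    have : α * p ^ n < q ^ n := by nlinarith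
    linarith
  rw [div_lt_iff₀ hden]
  nlinarith [mul_pos hα0 hP]
end
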